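/- For every δ ∈ (0, 1/2) and every R1 ∈ (0, 1), one has 1 − h2(δ ⋆ h2⁻¹(1 − R1)) < min{ R1, 1 − h2(δ) }. (The capacity 1 − h2(δ ⋆ h2⁻¹(1 − R1)) of the binary symmetric multihop relay channel with uniform state is strictly smaller than the cut-set bound min{R1, 1 − h2(δ)}.) -/

import Mathlib

open MeasureTheory

/-- Binary entropy function (base 2), with the convention `0 * log₂ 0 = 0`
(automatic since `Real.logb 2 0 = 0`). -/
noncomputable def h2 (p : ℝ) : ℝ :=
  -(p * Real.logb 2 p) - (1 - p) * Real.logb 2 (1 - p)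

/-- Inverse of the binary entropy function: for `q ≥ 0`, the unique `r ∈ [0, 1/2]`
with `h2 r = q` (realized as the infimum of the solution set); `0` for `q < 0`. -/
noncomputable def h2inv (q : ℝ) : ℝ :=
  if q < 0 then 0 else sInf {r : ℝ | 0 ≤ r ∧ r ≤ 1 / 2 ∧ h2 r = q}

/-- Binary convolution `a ⋆ b = a(1-b) + (1-a)b`. -/
def bconv (a b : ℝ) : ℝ := a * (1 - b) + (1 - a) * b

/-!
Proof idea: `h2` is strictly increasing on `[0, 1/2]`, and for `a, b ∈ (0, 1/2)` the convolution
`a ⋆ b` lies strictly between `max a b` and `1/2`. With `r = h2⁻¹(1 - R1)` we have `h2 r = 1 - R1`,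
so `h2 (δ ⋆ r)` exceeds both `1 - R1` and `h2 δ`.
-/

open Set

lemma h2_eq_binEntropy_div_log_two (p : ℝ) : h2 p = Real.binEntropy p / Real.log 2 := by
  simp only [h2, Real.binEntropy, Real.logb, Real.log_inv]
  ring

lemma h2_zero : h2 0 = 0 := by
  simp [h2_eq_binEntropy_div_log_two]

lemma h2_one_half : h2 (1 / 2) = 1 := by
  rw [h2_eq_binEntropy_div_log_two, one_div, Real.binEntropy_two_inv]
  exact div_self (Real.log_pos one_lt_two).ne'

lemma h2_nonneg {p : ℝ} (hp₀ : 0 ≤ p) (hp₁ : p ≤ 1) : 0 ≤ h2 p := by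
  rw [h2_eq_binEntropy_div_log_two]
  exact div_nonneg (Real.binEntropy_nonneg hp₀ hp₁) (Real.log_nonneg one_le_two)

lemma h2_continuous : Continuous h2 := by
  simp only [funext h2_eq_binEntropy_div_log_two]
  fun_prop

lemma h2_strictMonoOn : StrictMonoOn h2 (Icc 0 (1 / 2)) := by
  intro a ha b hb hab
  rw [one_div] at ha hb
  simp only [h2_eq_binEntropy_div_log_two]
  exact div_lt_div_of_pos_right (Real.binEntropy_strictMonoOn ha hb hab)
    (Real.log_pos one_lt_two)

lemma h2_surjOn : SurjOn h2 (Icc 0 (1 / 2)) (Icc 0 1) := by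
  have := intermediate_value_Icc (by norm_num : (0 : ℝ) ≤ 1 / 2) h2_continuous.continuousOn
  rwa [h2_zero, h2_one_half] at this

lemma h2inv_h2 {r : ℝ} (hr : r ∈ Icc 0 (1 / 2)) : h2inv (h2 r) = r := by
  have hsol : {s : ℝ | 0 ≤ s ∧ s ≤ 1 / 2 ∧ h2 s = h2 r} = {r} := by
    ext s
    refine ⟨fun ⟨hs₀, hs₁, hs⟩ => h2_strictMonoOn.injOn ⟨hs₀, hs₁⟩ hr hs, ?_⟩
    rintro rfl
    exact ⟨hr.1, hr.2, rfl⟩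
  have hnonneg : 0 ≤ h2 r := h2_nonneg hr.1 (by linarith [hr.2])
  rw [h2inv, if_neg hnonneg.not_gt, hsol, csInf_singleton]

lemma h2inv_mem_Ioo_and_h2_h2inv {q : ℝ} (hq : q ∈ Ioo 0 1) :
    h2inv q ∈ Ioo 0 (1 / 2) ∧ h2 (h2inv q) = q := by
  obtain ⟨r, hr, rfl⟩ := h2_surjOn (Ioo_subset_Icc_self hq)
  rw [h2inv_h2 hr]
  refine ⟨⟨hr.1.lt_of_ne ?_, hr.2.lt_of_ne ?_⟩, rfl⟩
  · rintro rfl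
    exact hq.1.ne' h2_zero
  · rintro rfl
    exact hq.2.ne h2_one_half

lemma bconv_comm (a b : ℝ) : bconv a b = bconv b a := by
  unfold bconv
  ring

lemma lt_bconv {a b : ℝ} (ha : 0 < a) (hb : b < 1 / 2) : b < bconv a b := by
  have : bconv a b - b = a * (1 - 2 * b) := by unfold bconv; ring
  nlinarith

lemma bconv_le_one_half {a b : ℝ} (ha : a ≤ 1 / 2) (hb : b ≤ 1 / 2) : bconv a b ≤ 1 / 2 := by
  have : 1 / 2 - bconv a b = 2 * (1 / 2 - a) * (1 / 2 - b) := by unfold bconv; ring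
  nlinarith

lemma h2_lt_h2_bconv {a b : ℝ} (ha : a ∈ Ioc 0 (1 / 2)) (hb : b ∈ Ico 0 (1 / 2)) :
    h2 b < h2 (bconv a b) := by
  have hlt : b < bconv a b := lt_bconv ha.1 hb.2
  exact h2_strictMonoOn ⟨hb.1, hb.2.le⟩ ⟨hb.1.trans hlt.le, bconv_le_one_half ha.2 hb.2.le⟩ hlt

/-- For every `δ ∈ (0,1/2)` and `R1 ∈ (0,1)`, the capacity
`1 − h2(δ ⋆ h2⁻¹(1 − R1))` of the binary symmetric multihop relay channel with
uniform state is strictly below the cut-set bound `min{R1, 1 − h2(δ)}`. -/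
theorem stmt9 (δ R1 : ℝ) (hδ : δ ∈ Set.Ioo (0 : ℝ) (1 / 2))
    (hR1 : R1 ∈ Set.Ioo (0 : ℝ) 1) :
    1 - h2 (bconv δ (h2inv (1 - R1))) < min R1 (1 - h2 δ) := by
  obtain ⟨hr, hh2r⟩ :=
    h2inv_mem_Ioo_and_h2_h2inv (q := 1 - R1) ⟨by linarith [hR1.2], by linarith [hR1.1]⟩
  set r := h2inv (1 - R1)
  have hgt_r : h2 r < h2 (bconv δ r) :=
    h2_lt_h2_bconv (Ioo_subset_Ioc_self hδ) (Ioo_subset_Ico_self hr)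
  have hgt_δ : h2 δ < h2 (bconv δ r) := by
    rw [bconv_comm]
    exact h2_lt_h2_bconv (Ioo_subset_Ioc_self hr) (Ioo_subset_Ico_self hδ)
  exact lt_min (by linarith) (by linarith)
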